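/- arXiv:2408.05632 — 3 statements merged into one kernel-verified Lean document; each statement's English description precedes it below -/
import Mathlib

section
/- A binary relation ≿ on l∞ satisfies axioms (A1)–(A5), Monotone Continuity (MC), Invariance with respect to the Scale of Utils (ISU), Invariance with respect to Individual Origins of Utilities (IOU), Strong Monotonicity, and Invariance with respect to Delaying Improving Sequences (IDIS) if and only if there exists a unique δ ∈ (0,1) such that the function I(x) = (1−δ)·Σ_{t=0}^∞ δ^t x_t is a constant equivalent representing ≿. -/
open scoped ENNReal BoundedContinuousFunction

noncomputable section

/-- `l∞`: the Banach space of bounded real sequences with the sup norm. -/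
abbrev Linf : Type := BoundedContinuousFunction ℕ ℝ

/-- `ba(ℕ)`: the norm dual of `l∞`, endowed with the weak* topology. -/
abbrev Ba : Type := WeakDual ℝ Linf

/-- The constant sequence `(θ, θ, ...)`. -/
def cst (θ : ℝ) : Linf := BoundedContinuousFunction.const ℕ θ

/-- Build an element of `l∞` from a bounded sequence. -/
def ofSeq (f : ℕ → ℝ) (C : ℝ) (h : ∀ n, |f n| ≤ C) : Linf :=
  BoundedContinuousFunction.ofNormedAddCommGroupDiscrete f C
    (by simpa [Real.norm_eq_abs] using h)

/-- The delayed sequence `(0, d₀, d₁, d₂, ...)`. -/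
def delaySeq (d : Linf) : Linf :=
  ofSeq (fun n => if n = 0 then 0 else d (n - 1)) ‖d‖ (by
    intro n
    by_cases h : n = 0
    · simp [h]
    · simpa [h, Real.norm_eq_abs] using d.norm_coe_le_norm (n - 1))

/-- The shifted sequence `(x₁, x₂, x₃, ...)`. -/
def shiftSeq (x : Linf) : Linf :=
  x.compContinuous ⟨fun n => n + 1, continuous_of_discreteTopology⟩

/-- The permuted sequence `x_σ = (x_{σ 0}, x_{σ 1}, ...)`. -/
def permSeq (σ : Equiv.Perm ℕ) (x : Linf) : Linf :=
  x.compContinuous ⟨fun n => σ n, continuous_of_discreteTopology⟩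

/-- The indicator sequence of a set `A ⊆ ℕ`. -/
def indic (A : Set ℕ) : Linf :=
  ofSeq (A.indicator fun _ => (1 : ℝ)) 1 (by
    intro n
    by_cases h : n ∈ A
    · simp [Set.indicator_of_mem h]
    · simp [Set.indicator_of_notMem h])

/-- `kEx`: the sequence equal to `k` on `E` and to `x` off `E`. -/
def patch (k : ℝ) (E : Set ℕ) (x : Linf) : Linf :=
  ofSeq (fun n => E.indicator (fun _ => k) n + Eᶜ.indicator (fun m => x m) n)
    (|k| + ‖x‖) (by
    intro n
    by_cases h : n ∈ E
    · simp only [Set.indicator_of_mem h, Set.indicator_of_notMem (by simpa using h :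
        n ∉ Eᶜ), add_zero]
      exact le_add_of_le_of_nonneg le_rfl (norm_nonneg x)
    · simp only [Set.indicator_of_notMem h, Set.indicator_of_mem (by simpa using h :
        n ∈ Eᶜ), zero_add]
      calc |x n| ≤ ‖x‖ := by simpa [Real.norm_eq_abs] using x.norm_coe_le_norm n
      _ ≤ |k| + ‖x‖ := le_add_of_nonneg_left (abs_nonneg k))

/-- The exponential discounted sum `(1-δ) ∑ δ^t x_t` (convention `0^0 = 1`). -/
def discSum (δ : ℝ) (x : Linf) : ℝ := (1 - δ) * ∑' t, δ ^ t * x t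

/-! ### Axioms -/

/-- The strict (asymmetric) part of a relation. -/
def SPref (R : Linf → Linf → Prop) (x y : Linf) : Prop := R x y ∧ ¬ R y x

/-- (A1) Weak order: complete and transitive. -/
def A1 (R : Linf → Linf → Prop) : Prop :=
  (∀ x y, R x y ∨ R y x) ∧ ∀ x y z, R x y → R y z → R x z

/-- (A2) Monotonicity. -/
def A2 (R : Linf → Linf → Prop) : Prop :=
  (∀ x y : Linf, (∀ n, y n ≤ x n) → R x y) ∧ SPref R (cst 1) (cst 0)

/-- (A3) Continuity. -/
def A3 (R : Linf → Linf → Prop) : Prop := ∀ x y z : Linf,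
  IsClosed {α : ℝ | α ∈ Set.Icc (0 : ℝ) 1 ∧ R (α • x + (1 - α) • z) y} ∧
  IsClosed {α : ℝ | α ∈ Set.Icc (0 : ℝ) 1 ∧ R y (α • x + (1 - α) • z)}

/-- (A4) Invariance with respect to a common reference point. -/
def A4 (R : Linf → Linf → Prop) : Prop :=
  ∀ x y : Linf, ∀ θ : ℝ, R x y → R (x + cst θ) (y + cst θ)

/-- (A5) Convexity. -/
def A5 (R : Linf → Linf → Prop) : Prop :=
  ∀ x y : Linf, ∀ θ lam : ℝ, lam ∈ Set.Icc (0 : ℝ) 1 →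
    R x (cst θ) → R y (cst θ) → R (lam • x + (1 - lam) • y) (cst θ)

/-- Axioms (A1)-(A5) together. -/
def A15 (R : Linf → Linf → Prop) : Prop := A1 R ∧ A2 R ∧ A3 R ∧ A4 R ∧ A5 R

/-- (MC) Monotone continuity. -/
def MC (R : Linf → Linf → Prop) : Prop :=
  ∀ (x : Linf) (θ : ℝ), SPref R x (cst θ) →
    ∀ E : ℕ → Set ℕ, (∀ n, E (n + 1) ⊆ E n) → (⋂ n, E n) = ∅ →
      ∀ k : ℝ, ∃ n₀ : ℕ, SPref R (patch k (E n₀) x) (cst θ)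

/-- (IDIS) Invariance with respect to delaying improving sequences. -/
def IDIS (R : Linf → Linf → Prop) : Prop :=
  ∀ x d : Linf, R (x + d) x → R (x + delaySeq d) x

/-- (ISU) Invariance with respect to the scale of utils. -/
def ISU (R : Linf → Linf → Prop) : Prop :=
  ∀ x y : Linf, ∀ α : ℝ, 0 ≤ α → R x y → R (α • x) (α • y)

/-- (IOU) Invariance with respect to individual origins of utilities. -/
def IOU (R : Linf → Linf → Prop) : Prop :=
  ∀ x y z : Linf, (R x y ∧ R y x) → (R (x + z) (y + z) ∧ R (y + z) (x + z))

/-- Strong monotonicity. -/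
def StrongMono (R : Linf → Linf → Prop) : Prop :=
  (∀ x y : Linf, (∀ n, y n ≤ x n) → R x y) ∧
  ∀ x y : Linf, (∀ n, y n ≤ x n) → x ≠ y → SPref R x y

/-- (ITIS) Invariance with respect to applying `T` to improving sequences. -/
def ITIS (T : Linf → Linf) (R : Linf → Linf → Prop) : Prop :=
  ∀ x d : Linf, R (x + d) x → R (x + T d) x

/-- Time invariance: `x ∼ (x₁, x₂, x₃, ...)`. -/
def TimeInv (R : Linf → Linf → Prop) : Prop :=
  ∀ x : Linf, R x (shiftSeq x) ∧ R (shiftSeq x) x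

/-- `I` is a constant equivalent for `≿`: `x ∼ I(x)` for every `x`. -/
def ConstEquiv (R : Linf → Linf → Prop) (I : Linf → ℝ) : Prop :=
  ∀ x, R x (cst (I x)) ∧ R (cst (I x)) x

/-- `I` represents `≿`: `x ≿ y ↔ I(x) ≥ I(y)`. -/
def Represents (R : Linf → Linf → Prop) (I : Linf → ℝ) : Prop :=
  ∀ x y, R x y ↔ I y ≤ I x

/-! ### Discount structures -/

/-- A functional `p ∈ ba(ℕ)` is positive. -/
def IsPos (p : Ba) : Prop := ∀ x : Linf, (∀ n, 0 ≤ x n) → 0 ≤ p x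

/-- `Δ`: the set of discount structures. -/
def Delta : Set Ba := {p | IsPos p ∧ p (cst 1) = 1}

/-- `Δ^σ`: countably additive discount structures. -/
def DeltaSigma : Set Ba :=
  {p ∈ Delta | ∃ f : ℕ → ℝ, (∀ n, 0 ≤ f n) ∧ Summable f ∧ (∑' n, f n) = 1 ∧
    ∀ x : Linf, p x = ∑' n, f n * x n}

/-- `ℬ`: the set of Banach–Mazur limits. -/
def BM : Set Ba := {p ∈ Delta | ∀ x : Linf, p (shiftSeq x) = p x}

/-- The exponential discounting functionals with parameter `δ ∈ [0,1)`. -/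
def Geom : Set Ba := {p | ∃ δ ∈ Set.Ico (0 : ℝ) 1, ∀ x : Linf, p x = discSum δ x}

/-- `Δ(T*)`: discount structures that are eigenvectors of the adjoint of `T`,
expressed via the duality `⟨T x, p⟩ = λ ⟨x, p⟩`. -/
def DeltaT (T : Linf → Linf) : Set Ba :=
  {p ∈ Delta | ∃ lam : ℝ, ∀ x : Linf, p (T x) = lam * p x}

/-- A map `T : l∞ → l∞` is positive. -/
def PosMap (T : Linf → Linf) : Prop :=
  ∀ x : Linf, (∀ n, 0 ≤ x n) → ∀ n, 0 ≤ T x n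

/-- `ca(ℕ)`: countably additive elements of `ba(ℕ)`. -/
def caSet : Set Ba :=
  {μ | ∀ A : ℕ → Set ℕ, (∀ n, A (n + 1) ⊆ A n) → (⋂ n, A n) = ∅ →
    Filter.Tendsto (fun n => μ (indic (A n))) Filter.atTop (nhds 0)}

/-- `pa(ℕ)`: purely finitely additive elements of `ba(ℕ)`. -/
def paSet : Set Ba := {μ | ∀ n : ℕ, μ (indic {n}) = 0}

/-- `c` is grounded on `D`. -/
def Grounded (D : Set Ba) (c : Ba → ℝ≥0∞) : Prop := (⨅ p ∈ D, c p) = 0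

/-- `c` is grounded on `[0,1]`. -/
def Grounded01 (c : ℝ → ℝ≥0∞) : Prop := (⨅ δ ∈ Set.Icc (0 : ℝ) 1, c δ) = 0

/-- Maxmin form: `I(x) = min_{p ∈ D} ⟨x,p⟩`, the minimum being attained. -/
def MinForm (D : Set Ba) (I : Linf → ℝ) : Prop :=
  ∀ x, (∃ p ∈ D, I x = p x) ∧ ∀ p ∈ D, I x ≤ p x

/-- Variational form: `I(x) = min_{p ∈ D} {⟨x,p⟩ + c(p)}`, the minimum being attained. -/
def VarMinForm (D : Set Ba) (c : Ba → ℝ≥0∞) (I : Linf → ℝ) : Prop :=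
  ∀ x, (∃ p ∈ D, (I x : EReal) = (p x : EReal) + (c p : EReal)) ∧
    ∀ p ∈ D, (I x : EReal) ≤ (p x : EReal) + (c p : EReal)

/-- Maxmin discounting form over a set of discount factors `E ⊆ [0,1)`. -/
def MinDelta (E : Set ℝ) (I : Linf → ℝ) : Prop :=
  ∀ x, (∃ δ ∈ E, I x = discSum δ x) ∧ ∀ δ ∈ E, I x ≤ discSum δ x

/-- Variational discounting form over discount factors. -/
def VarMinDelta (E : Set ℝ) (c : ℝ → ℝ≥0∞) (I : Linf → ℝ) : Prop :=
  ∀ x, (∃ δ ∈ E, (I x : EReal) = (discSum δ x : EReal) + (c δ : EReal)) ∧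
    ∀ δ ∈ E, (I x : EReal) ≤ (discSum δ x : EReal) + (c δ : EReal)

/-- Convexity for `ℝ≥0∞`-valued functions on a subset of `ba(ℕ)`. -/
def ConvexENN (D : Set Ba) (g : Ba → ℝ≥0∞) : Prop :=
  ∀ p ∈ D, ∀ q ∈ D, ∀ a b : ℝ, 0 ≤ a → 0 ≤ b → a + b = 1 →
    g (a • p + b • q) ≤ ENNReal.ofReal a * g p + ENNReal.ofReal b * g q


/-!
Completeness, continuity and monotonicity give every stream `x` a constant equivalent `I x`,
unique by strict monotonicity, so `I` represents `≿` and fixes constants. IOU and ISU make `I`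
additive and positively homogeneous, hence a positive linear functional on `l∞`, and monotone
continuity applied to the tails `1_{[n,∞)}` makes it countably additive: `I x = ∑ x_t I(e_t)`.
IDIS says that `I ∘ delay` is nonnegative wherever `I` is, which forces `I ∘ delay = δ I`; hence
`I(e_t) = δ^t I(e₀)`, and `I 1 = 1` gives `δ < 1` and `I(e₀) = 1 - δ`. Conversely, every axiom
holds for the strictly monotone linear functional `discSum δ` (monotone continuity by dominated
convergence), and `δ = 1 - I(e₀)` is determined by `≿`.
-/

open Filter Topology

section Sequences

lemma abs_apply_le_norm (x : Linf) (n : ℕ) : |x n| ≤ ‖x‖ := by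
  simpa only [Real.norm_eq_abs] using x.norm_coe_le_norm n

@[simp] lemma cst_apply (θ : ℝ) (n : ℕ) : cst θ n = θ := rfl

lemma cst_add (a b : ℝ) : cst a + cst b = cst (a + b) := by
  ext; simp

lemma cst_smul (a θ : ℝ) : a • cst θ = cst (a * θ) := by
  ext; simp

lemma cst_zero : cst 0 = 0 := by
  ext; simp

lemma cst_injective : Function.Injective cst := fun a b h => by
  simpa using congrArg (· 0) h

open Classical in
lemma indic_apply (A : Set ℕ) (n : ℕ) : indic A n = if n ∈ A then 1 else 0 := by
  by_cases h : n ∈ A <;> simp [indic, ofSeq, h]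

lemma indic_nonneg (A : Set ℕ) : 0 ≤ indic A := fun n => by
  change (0 : ℝ) ≤ indic A n
  rw [indic_apply]; split_ifs <;> simp

lemma indic_singleton_pos (t : ℕ) : 0 < indic {t} :=
  (indic_nonneg _).lt_of_ne fun h => by simpa [indic_apply] using congrArg (· t) h

lemma indic_mono {A B : Set ℕ} (h : A ⊆ B) : indic A ≤ indic B := fun n => by
  change indic A n ≤ indic B n
  by_cases hA : n ∈ A
  · simp [indic_apply, hA, h hA]
  · by_cases hB : n ∈ B <;> simp [indic_apply, hA, hB]

lemma delaySeq_apply (d : Linf) (n : ℕ) :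
    delaySeq d n = if n = 0 then 0 else d (n - 1) := rfl

lemma isLinearMap_delaySeq : IsLinearMap ℝ delaySeq where
  map_add d e := by ext n; by_cases h : n = 0 <;> simp [delaySeq_apply, h]
  map_smul a d := by ext n; by_cases h : n = 0 <;> simp [delaySeq_apply, h]

lemma delaySeq_indic_singleton (t : ℕ) : delaySeq (indic {t}) = indic {t + 1} := by
  ext n
  rcases n with _ | n <;> simp [delaySeq_apply, indic_apply]

open Classical in
lemma patch_apply (k : ℝ) (E : Set ℕ) (x : Linf) (n : ℕ) :
    patch k E x n = if n ∈ E then k else x n := by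
  by_cases h : n ∈ E <;> simp [patch, ofSeq, h]

end Sequences

section DiscountedSum

variable {δ : ℝ}

lemma summable_pow_mul_apply (hδ : |δ| < 1) (x : Linf) : Summable fun t => δ ^ t * x t :=
  .of_norm_bounded ((summable_geometric_of_abs_lt_one hδ).abs.mul_right ‖x‖) fun t => by
    rw [norm_mul, Real.norm_eq_abs]
    exact mul_le_mul_of_nonneg_left (x.norm_coe_le_norm t) (abs_nonneg _)

lemma hasSum_discSum (hδ : |δ| < 1) (x : Linf) :
    HasSum (fun t => (1 - δ) * (δ ^ t * x t)) (discSum δ x) :=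
  (summable_pow_mul_apply hδ x).hasSum.mul_left (1 - δ)

lemma isLinearMap_discSum (hδ : |δ| < 1) : IsLinearMap ℝ (discSum δ) where
  map_add x y := (hasSum_discSum hδ (x + y)).unique <|
    ((hasSum_discSum hδ x).add (hasSum_discSum hδ y)).congr_fun fun t => by
      simp only [BoundedContinuousFunction.coe_add, Pi.add_apply]; ring
  map_smul a x := (hasSum_discSum hδ (a • x)).unique <|
    ((hasSum_discSum hδ x).mul_left a).congr_fun fun t => by
      simp only [BoundedContinuousFunction.coe_smul, smul_eq_mul]; ring

lemma discSum_cst (hδ : |δ| < 1) (θ : ℝ) : discSum δ (cst θ) = θ := by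
  have : 1 - δ ≠ 0 := by linarith [le_abs_self δ]
  simp only [discSum, cst_apply, tsum_mul_right, tsum_geometric_of_abs_lt_one hδ]
  field_simp

lemma discSum_indic_zero : discSum δ (indic {0}) = 1 - δ := by
  rw [discSum, tsum_eq_single 0 fun t ht => by simp [indic_apply, ht]]
  simp [indic_apply]

lemma discSum_delaySeq (hδ : |δ| < 1) (d : Linf) :
    discSum δ (delaySeq d) = δ * discSum δ d := by
  rw [discSum, discSum, (summable_pow_mul_apply hδ _).tsum_eq_zero_add]
  simp only [pow_zero, delaySeq_apply, ↓reduceIte, mul_zero, pow_succ, mul_comm _ δ,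
    Nat.add_eq_zero_iff, one_ne_zero, and_false, add_tsub_cancel_right, mul_assoc, tsum_mul_left,
    zero_add]
  ring

lemma discSum_strictMono (h0 : 0 < δ) (h1 : δ < 1) : StrictMono (discSum δ) := by
  intro x y hxy
  obtain ⟨n, hn⟩ : ∃ n, x n < y n := by
    by_contra! h
    exact hxy.ne (BoundedContinuousFunction.ext fun n => le_antisymm (hxy.le n) (h n))
  have hδ : |δ| < 1 := by rwa [abs_of_pos h0]
  exact mul_lt_mul_of_pos_left (Summable.tsum_lt_tsum
    (fun t => mul_le_mul_of_nonneg_left (hxy.le t) (pow_nonneg h0.le t))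
    (mul_lt_mul_of_pos_left hn (pow_pos h0 n))
    (summable_pow_mul_apply hδ x) (summable_pow_mul_apply hδ y)) (by linarith)

lemma tendsto_discSum_patch (hδ : |δ| < 1) (k : ℝ) (x : Linf) {E : ℕ → Set ℕ}
    (hE : ∀ t, ∀ᶠ n in atTop, t ∉ E n) :
    Tendsto (fun n => discSum δ (patch k (E n) x)) atTop (𝓝 (discSum δ x)) := by
  refine .const_mul (1 - δ) (tendsto_tsum_of_dominated_convergence
    (bound := fun t => |δ| ^ t * (|k| + ‖x‖))
    ((summable_geometric_of_lt_one (abs_nonneg δ) hδ).mul_right _) (fun t => ?_) ?_)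
  · refine tendsto_const_nhds.congr' ((hE t).mono fun n hn => ?_)
    simp [patch_apply, hn]
  · refine .of_forall fun n t => ?_
    rw [norm_mul, norm_pow, Real.norm_eq_abs, patch_apply]
    refine mul_le_mul_of_nonneg_left ?_ (pow_nonneg (abs_nonneg δ) t)
    split_ifs
    · exact le_add_of_nonneg_right (norm_nonneg x)
    · exact (abs_apply_le_norm x t).trans (le_add_of_nonneg_left (abs_nonneg k))

end DiscountedSum

lemma eventually_notMem_of_iInter_eq_empty {E : ℕ → Set ℕ} (hE : ∀ n, E (n + 1) ⊆ E n)
    (h : (⋂ n, E n) = ∅) (t : ℕ) : ∀ᶠ n in atTop, t ∉ E n := by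
  obtain ⟨n, hn⟩ : ∃ n, t ∉ E n := by
    simpa using Set.eq_empty_iff_forall_notMem.1 h t
  exact eventually_atTop.2 ⟨n, fun m hm ht => hn (antitone_nat_of_succ_le hE hm ht)⟩

section Represents

variable {R : Linf → Linf → Prop} {I : Linf → ℝ}

lemma Represents.sPref_iff (hR : Represents R I) (x y : Linf) : SPref R x y ↔ I y < I x := by
  rw [SPref, hR, hR, not_le]
  exact and_iff_right_of_imp le_of_lt

lemma Represents.a1 (hR : Represents R I) : A1 R :=
  ⟨fun x y => (le_total (I y) (I x)).imp (hR x y).2 (hR y x).2,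
    fun x y z hxy hyz => (hR x z).2 (((hR y z).1 hyz).trans ((hR x y).1 hxy))⟩

lemma Represents.strongMono (hR : Represents R I) (hI : StrictMono I) : StrongMono R :=
  ⟨fun x y h => (hR x y).2 (hI.monotone h), fun x y h hne =>
    (hR.sPref_iff x y).2 (hI (lt_of_le_of_ne h (Ne.symm hne)))⟩

lemma StrongMono.a2 (h : StrongMono R) : A2 R :=
  ⟨h.1, h.2 _ _ (fun _ => zero_le_one) (cst_injective.ne one_ne_zero)⟩

lemma Represents.a3 (hR : Represents R I) (hI : IsLinearMap ℝ I) : A3 R := by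
  intro x y z
  unfold Represents at hR
  simp only [hR, hI.map_add, hI.map_smul, smul_eq_mul, Set.ofPred_and, Set.ofPred_mem_eq]
  refine ⟨isClosed_Icc.inter (isClosed_le ?_ ?_), isClosed_Icc.inter (isClosed_le ?_ ?_)⟩ <;>
    fun_prop

lemma Represents.a4 (hR : Represents R I) (hI : IsLinearMap ℝ I) : A4 R := by
  intro x y θ
  unfold Represents at hR
  simp only [hR, hI.map_add, add_le_add_iff_right, imp_self]

lemma Represents.a5 (hR : Represents R I) (hI : IsLinearMap ℝ I) : A5 R := by
  intro x y θ lam ⟨h0, h1⟩ hx hy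
  rw [hR] at hx hy ⊢
  rw [hI.map_add, hI.map_smul, hI.map_smul, smul_eq_mul, smul_eq_mul]
  nlinarith

lemma Represents.isu (hR : Represents R I) (hI : IsLinearMap ℝ I) : ISU R := by
  intro x y α hα
  unfold Represents at hR
  simp only [hR, hI.map_smul, smul_eq_mul]
  exact fun h => mul_le_mul_of_nonneg_left h hα

lemma Represents.iou (hR : Represents R I) (hI : IsLinearMap ℝ I) : IOU R := by
  intro x y z
  unfold Represents at hR
  simp only [hR, hI.map_add]
  exact fun ⟨h, h'⟩ => ⟨by linarith, by linarith⟩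

lemma Represents.idis (hR : Represents R I) (hI : IsLinearMap ℝ I) {δ : ℝ} (hδ : 0 ≤ δ)
    (hdelay : ∀ d, I (delaySeq d) = δ * I d) : IDIS R := by
  intro x d
  unfold Represents at hR
  simp only [hR, hI.map_add, hdelay, le_add_iff_nonneg_right]
  exact mul_nonneg hδ

lemma Represents.mc (hR : Represents R I)
    (hpatch : ∀ k x (E : ℕ → Set ℕ), (∀ t, ∀ᶠ n in atTop, t ∉ E n) →
      Tendsto (fun n => I (patch k (E n) x)) atTop (𝓝 (I x))) : MC R := by
  intro x θ hx E hE hE' k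
  rw [hR.sPref_iff] at hx
  simp only [hR.sPref_iff]
  exact ((hpatch k x E (eventually_notMem_of_iInter_eq_empty hE hE')).eventually
    (lt_mem_nhds hx)).exists

end Represents

theorem axioms_of_represents_discSum {R : Linf → Linf → Prop} {δ : ℝ} (hδ : δ ∈ Set.Ioo 0 1)
    (hR : Represents R (discSum δ)) :
    A15 R ∧ MC R ∧ ISU R ∧ IOU R ∧ StrongMono R ∧ IDIS R := by
  have hδ' : |δ| < 1 := by rw [abs_of_pos hδ.1]; exact hδ.2
  have hlin := isLinearMap_discSum hδ'
  have hSM := hR.strongMono (discSum_strictMono hδ.1 hδ.2)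
  exact ⟨⟨hR.a1, hSM.a2, hR.a3 hlin, hR.a4 hlin, hR.a5 hlin⟩,
    hR.mc fun k x _ => tendsto_discSum_patch hδ' k x, hR.isu hlin, hR.iou hlin, hSM,
    hR.idis hlin hδ.1.le (discSum_delaySeq hδ')⟩

section ConstantEquivalent

variable {R : Linf → Linf → Prop} {I : Linf → ℝ}

lemma StrongMono.rel_cst_iff (h : StrongMono R) {a b : ℝ} : R (cst a) (cst b) ↔ b ≤ a :=
  ⟨fun hab => not_lt.1 fun hlt => (h.2 _ _ (fun _ => hlt.le) (cst_injective.ne hlt.ne')).2 hab,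
    fun hab => h.1 _ _ fun _ => hab⟩

lemma exists_equiv_cst (hcomp : ∀ x y, R x y ∨ R y x) (hA3 : A3 R)
    (hmono : ∀ x y : Linf, (∀ n, y n ≤ x n) → R x y) (x : Linf) :
    ∃ θ, R x (cst θ) ∧ R (cst θ) x := by
  set a := ‖x‖
  have hseg (α : ℝ) : α • cst a + (1 - α) • cst (-a) = cst (α * a + (1 - α) * -a) := by
    rw [cst_smul, cst_smul, cst_add]
  obtain ⟨α, -, ⟨-, hαx⟩, ⟨-, hxα⟩⟩ := isPreconnected_closed_iff.1 isPreconnected_Icc _ _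
    (hA3 (cst a) x (cst (-a))).1 (hA3 (cst a) x (cst (-a))).2
    (fun α hα => (hcomp _ x).imp (⟨hα, ·⟩) (⟨hα, ·⟩))
    ⟨1, Set.right_mem_Icc.2 zero_le_one, Set.right_mem_Icc.2 zero_le_one, by
      rw [hseg]; exact hmono _ _ fun n => by simpa using (abs_le.1 (abs_apply_le_norm x n)).2⟩
    ⟨0, Set.left_mem_Icc.2 zero_le_one, Set.left_mem_Icc.2 zero_le_one, by
      rw [hseg]; exact hmono _ _ fun n => by simpa using (abs_le.1 (abs_apply_le_norm x n)).1⟩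
  rw [hseg] at hαx hxα
  exact ⟨_, hxα, hαx⟩

lemma ConstEquiv.apply_cst (hI : ConstEquiv R I) (h : StrongMono R) (θ : ℝ) : I (cst θ) = θ :=
  le_antisymm (h.rel_cst_iff.1 (hI _).1) (h.rel_cst_iff.1 (hI _).2)

lemma ConstEquiv.represents (hI : ConstEquiv R I) (htrans : ∀ x y z, R x y → R y z → R x z)
    (h : StrongMono R) : Represents R I := fun x y =>
  ⟨fun hxy => h.rel_cst_iff.1 (htrans _ _ _ (hI x).2 (htrans _ _ _ hxy (hI y).1)),
    fun hxy => htrans _ _ _ (hI x).1 (htrans _ _ _ (h.rel_cst_iff.2 hxy) (hI y).2)⟩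

end ConstantEquivalent

section LinearFunctional

variable {R : Linf → Linf → Prop} {I : Linf → ℝ}

lemma Represents.apply_add_eq (hR : Represents R I) (hIOU : IOU R) {x y : Linf}
    (h : I x = I y) (z : Linf) : I (x + z) = I (y + z) := by
  have := hIOU x y z ⟨(hR x y).2 h.ge, (hR y x).2 h.le⟩
  exact le_antisymm ((hR _ _).1 this.2) ((hR _ _).1 this.1)

lemma Represents.apply_smul_eq (hR : Represents R I) (hISU : ISU R) {x y : Linf}
    (h : I x = I y) {a : ℝ} (ha : 0 ≤ a) : I (a • x) = I (a • y) :=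
  le_antisymm ((hR _ _).1 (hISU y x a ha ((hR y x).2 h.le)))
    ((hR _ _).1 (hISU x y a ha ((hR x y).2 h.ge)))

lemma Represents.isLinearMap (hR : Represents R I) (hcst : ∀ θ, I (cst θ) = θ) (hIOU : IOU R)
    (hISU : ISU R) : IsLinearMap ℝ I := by
  have hadd (x y : Linf) : I (x + y) = I x + I y := by
    calc I (x + y) = I (y + cst (I x)) := by
          rw [add_comm y, hR.apply_add_eq hIOU (hcst (I x)).symm]
      _ = I (cst (I y) + cst (I x)) := hR.apply_add_eq hIOU (hcst (I y)).symm _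
      _ = I x + I y := by rw [cst_add, hcst, add_comm]
  have hsmul_of_nonneg {a : ℝ} (ha : 0 ≤ a) (x : Linf) : I (a • x) = a * I x := by
    rw [hR.apply_smul_eq hISU (hcst (I x)).symm ha, cst_smul, hcst]
  have hneg (x : Linf) : I (-x) = -I x := by
    have := hadd x (-x)
    rw [add_neg_cancel, ← cst_zero, hcst] at this
    linarith
  refine ⟨hadd, fun a x => ?_⟩
  rcases le_total 0 a with ha | ha
  · exact hsmul_of_nonneg ha x
  · rw [← neg_neg a, neg_smul, hneg, hsmul_of_nonneg (neg_nonneg.2 ha), smul_eq_mul]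
    ring

lemma Represents.strictMono (hR : Represents R I) (h : StrongMono R) : StrictMono I :=
  fun x y hxy => lt_of_not_ge fun hle => (h.2 y x hxy.le hxy.ne').2 ((hR x y).2 hle)

lemma Represents.map_delaySeq (hR : Represents R I) (hI : IsLinearMap ℝ I) (hIDIS : IDIS R)
    (h0 : I (indic {0}) ≠ 0) (d : Linf) :
    I (delaySeq d) = I (indic {1}) / I (indic {0}) * I d := by
  have hpos {e : Linf} (he : 0 ≤ I e) : 0 ≤ I (delaySeq e) := by
    have := hIDIS 0 e ((hR _ _).2 (by rwa [zero_add, hI.map_zero]))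
    rwa [hR, zero_add, hI.map_zero] at this
  set c := I d / I (indic {0})
  have hker : I (d - c • indic {0}) = 0 := by
    rw [hI.map_sub, hI.map_smul, smul_eq_mul, div_mul_cancel₀ _ h0, sub_self]
  have hdelay : I (delaySeq (d - c • indic {0})) = 0 := by
    refine le_antisymm ?_ (hpos hker.ge)
    have := hpos (e := -(d - c • indic {0})) (by rw [hI.map_neg, hker, neg_zero])
    rwa [isLinearMap_delaySeq.map_neg, hI.map_neg, neg_nonneg] at this
  rw [isLinearMap_delaySeq.map_sub, isLinearMap_delaySeq.map_smul, hI.map_sub, hI.map_smul,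
    delaySeq_indic_singleton, sub_eq_zero, smul_eq_mul] at hdelay
  rw [hdelay]
  ring

end LinearFunctional

section SeriesRepresentation

variable {I : Linf → ℝ}

-- `patch 0 (Set.Ici n) x = (x₀, …, x_{n-1}, 0, 0, …)` is the truncation of `x` at time `n`.
lemma patch_zero_Ici_succ (n : ℕ) (x : Linf) :
    patch 0 (Set.Ici (n + 1)) x = patch 0 (Set.Ici n) x + x n • indic {n} := by
  ext m
  simp only [BoundedContinuousFunction.coe_add, BoundedContinuousFunction.coe_smul,
    Pi.add_apply, smul_eq_mul, patch_apply, indic_apply, Set.mem_Ici, Set.mem_singleton_iff]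
  rcases lt_trichotomy m n with h | rfl | h
  · simp [h.ne, h.not_ge, (h.trans (Nat.lt_succ_self n)).not_ge]
  · simp
  · simp [h.ne', h.le, Nat.succ_le_of_lt h]

lemma patch_zero_Ici_add_indic_Ici (n : ℕ) :
    patch 0 (Set.Ici n) (cst 1) + indic (Set.Ici n) = cst 1 := by
  ext m
  by_cases h : n ≤ m <;> simp [patch_apply, indic_apply, h]

lemma abs_sub_patch_zero_Ici_le (n : ℕ) (x : Linf) (m : ℕ) :
    |(x - patch 0 (Set.Ici n) x) m| ≤ (‖x‖ • indic (Set.Ici n)) m := by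
  by_cases h : n ≤ m <;> simp [patch_apply, indic_apply, h, abs_apply_le_norm]

lemma IsLinearMap.map_patch_zero_Ici (hI : IsLinearMap ℝ I) (n : ℕ) (x : Linf) :
    I (patch 0 (Set.Ici n) x) = ∑ t ∈ Finset.range n, x t * I (indic {t}) := by
  induction n with
  | zero =>
    have : patch 0 (Set.Ici 0) x = 0 := by ext m; simp [patch_apply]
    rw [this, hI.map_zero, Finset.sum_range_zero]
  | succ n ih =>
    rw [patch_zero_Ici_succ, hI.map_add, hI.map_smul, ih, Finset.sum_range_succ, smul_eq_mul]

lemma IsLinearMap.abs_le_of_abs_apply_le (hI : IsLinearMap ℝ I) (hmono : Monotone I)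
    {y z : Linf} (h : ∀ m, |y m| ≤ z m) : |I y| ≤ I z := by
  refine abs_le.2 ⟨?_, hmono fun m => (le_abs_self _).trans (h m)⟩
  rw [← hI.map_neg]
  exact hmono fun m => (neg_le_neg (h m)).trans (neg_abs_le _)

lemma IsLinearMap.hasSum_mul_apply_indic_singleton (hI : IsLinearMap ℝ I) (hmono : Monotone I)
    (htail : Tendsto (fun n => I (indic (Set.Ici n))) atTop (𝓝 0)) (x : Linf) :
    HasSum (fun t => x t * I (indic {t})) (I x) := by
  have hnonneg (t : ℕ) : 0 ≤ I (indic {t}) := by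
    simpa [hI.map_zero] using hmono (indic_nonneg {t})
  have hsummable : Summable fun t => I (indic {t}) := by
    refine summable_of_sum_range_le (c := I (cst 1)) hnonneg fun n => ?_
    have := congrArg I (patch_zero_Ici_add_indic_Ici n)
    rw [hI.map_add, hI.map_patch_zero_Ici] at this
    simp only [cst_apply, one_mul] at this
    linarith [hmono (indic_nonneg (Set.Ici n)), hI.map_zero]
  refine ((hsummable.mul_left ‖x‖).of_norm_bounded fun t => ?_).hasSum_iff_tendsto_nat.2 ?_
  · rw [norm_mul, Real.norm_of_nonneg (hnonneg t)]
    exact mul_le_mul_of_nonneg_right (x.norm_coe_le_norm t) (hnonneg t)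
  · simp_rw [← hI.map_patch_zero_Ici]
    rw [tendsto_iff_norm_sub_tendsto_zero]
    refine squeeze_zero (fun n => norm_nonneg _) (fun n => ?_)
      (by simpa using htail.const_mul ‖x‖)
    rw [Real.norm_eq_abs, abs_sub_comm, ← hI.map_sub, ← smul_eq_mul, ← hI.map_smul]
    exact hI.abs_le_of_abs_apply_le hmono (abs_sub_patch_zero_Ici_le n x)

end SeriesRepresentation

section Discounting

variable {R : Linf → Linf → Prop} {I : Linf → ℝ}

lemma Represents.tendsto_apply_indic_Ici (hR : Represents R I) (hI : IsLinearMap ℝ I)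
    (hcst : ∀ θ, I (cst θ) = θ) (hmono : Monotone I) (hMC : MC R) :
    Tendsto (fun n => I (indic (Set.Ici n))) atTop (𝓝 0) := by
  have hnonneg (n : ℕ) : 0 ≤ I (indic (Set.Ici n)) := by
    simpa [hI.map_zero] using hmono (indic_nonneg (Set.Ici n))
  refine tendsto_order.2
    ⟨fun a ha => .of_forall fun n => ha.trans_le (hnonneg n), fun ε hε => ?_⟩
  obtain ⟨n₀, hn₀⟩ := hMC (cst 1) (1 - ε) ((hR.sPref_iff _ _).2 (by simp [hcst, hε]))
    (fun n => Set.Ici n) (fun n => Set.Ici_subset_Ici.2 n.le_succ)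
    (Set.eq_empty_of_forall_notMem fun m hm =>
      m.not_succ_le_self (Set.mem_iInter.1 hm (m + 1))) 0
  have hsplit := congrArg I (patch_zero_Ici_add_indic_Ici n₀)
  rw [hR.sPref_iff, hcst] at hn₀
  rw [hI.map_add, hcst] at hsplit
  refine eventually_atTop.2 ⟨n₀, fun n hn => ?_⟩
  linarith [hmono (indic_mono (Set.Ici_subset_Ici.2 hn))]

lemma apply_indic_singleton_of_map_delaySeq {δ : ℝ} (hdelay : ∀ d, I (delaySeq d) = δ * I d)
    (t : ℕ) :
    I (indic {t}) = δ ^ t * I (indic {0}) := by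
  induction t with
  | zero => rw [pow_zero, one_mul]
  | succ t ih => rw [← delaySeq_indic_singleton, hdelay, ih, pow_succ]; ring

lemma IsLinearMap.apply_indic_singleton_pos (hI : IsLinearMap ℝ I) (hstrict : StrictMono I)
    (t : ℕ) : 0 < I (indic {t}) := by
  simpa [hI.map_zero] using hstrict (indic_singleton_pos t)

lemma IsLinearMap.eq_discSum (hI : IsLinearMap ℝ I) (hstrict : StrictMono I)
    (htail : Tendsto (fun n => I (indic (Set.Ici n))) atTop (𝓝 0)) (hcst : I (cst 1) = 1)
    {δ : ℝ} (hdelay : ∀ d, I (delaySeq d) = δ * I d) :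
    δ ∈ Set.Ioo 0 1 ∧ ∀ x, I x = discSum δ x := by
  have hpos := hI.apply_indic_singleton_pos hstrict
  have hgeom := apply_indic_singleton_of_map_delaySeq hdelay
  set a := I (indic {0})
  have hδ0 : 0 < δ := by
    have := hpos 1
    rw [hgeom, pow_one] at this
    exact (pos_iff_pos_of_mul_pos this).2 (hpos 0)
  have hsum : HasSum (fun t => δ ^ t * a) 1 := by
    simpa [hgeom, hcst] using hI.hasSum_mul_apply_indic_singleton hstrict.monotone htail (cst 1)
  have hδ1 : δ < 1 := by
    have := (summable_mul_right_iff (hpos 0).ne').1 hsum.summable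
    simpa [abs_of_pos hδ0] using summable_geometric_iff_norm_lt_one.1 this
  have ha : a = 1 - δ := by
    have := hsum.tsum_eq
    rw [tsum_mul_right, tsum_geometric_of_lt_one hδ0.le hδ1] at this
    field_simp [(sub_pos.2 hδ1).ne'] at this
    linarith
  refine ⟨⟨hδ0, hδ1⟩, fun x =>
    (hI.hasSum_mul_apply_indic_singleton hstrict.monotone htail x).unique
      ((hasSum_discSum (by rwa [abs_of_pos hδ0]) x).congr_fun fun t => ?_)⟩
  rw [hgeom, ha]
  ring

end Discounting

theorem exists_discSum_of_axioms {R : Linf → Linf → Prop}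
    (h : A15 R ∧ MC R ∧ ISU R ∧ IOU R ∧ StrongMono R ∧ IDIS R) :
    ∃ δ ∈ Set.Ioo (0 : ℝ) 1, ConstEquiv R (discSum δ) ∧ Represents R (discSum δ) := by
  obtain ⟨⟨⟨hcomp, htrans⟩, -, hA3, -, -⟩, hMC, hISU, hIOU, hSM, hIDIS⟩ := h
  choose I hI using exists_equiv_cst hcomp hA3 hSM.1
  have hcst := ConstEquiv.apply_cst hI hSM
  have hR := ConstEquiv.represents hI htrans hSM
  have hlin := hR.isLinearMap hcst hIOU hISU
  have hstrict := hR.strictMono hSM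
  have hdelay := hR.map_delaySeq hlin hIDIS (hlin.apply_indic_singleton_pos hstrict 0).ne'
  obtain ⟨hδ, hIδ⟩ := hlin.eq_discSum hstrict
    (hR.tendsto_apply_indic_Ici hlin hcst hstrict.monotone hMC) (hcst 1) hdelay
  rw [show I = discSum _ from funext hIδ] at hI hR
  exact ⟨_, hδ, hI, hR⟩

lemma Represents.eq_of_constEquiv_discSum {R : Linf → Linf → Prop} {δ δ' : ℝ} (hδ : |δ| < 1)
    (hR : Represents R (discSum δ)) (hI : ConstEquiv R (discSum δ')) : δ' = δ := by
  have := le_antisymm ((hR _ _).1 (hI (indic {0})).2) ((hR _ _).1 (hI (indic {0})).1)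
  rw [discSum_cst hδ, discSum_indic_zero, discSum_indic_zero] at this
  linarith

/-- EDU representation: a binary relation `≿` on `l∞` satisfies
(A1)-(A5), MC, ISU, IOU, Strong Monotonicity and IDIS iff there exists a unique
`δ ∈ (0,1)` such that `I(x) = (1-δ) ∑ δ^t x_t` is a constant equivalent representing `≿`. -/
theorem stmt2 (R : Linf → Linf → Prop) :
    (A15 R ∧ MC R ∧ ISU R ∧ IOU R ∧ StrongMono R ∧ IDIS R) ↔
      ∃! δ : ℝ, δ ∈ Set.Ioo (0 : ℝ) 1 ∧
        ConstEquiv R (fun x => discSum δ x) ∧ Represents R (fun x => discSum δ x) := by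
  refine ⟨fun h => ?_, fun ⟨δ, ⟨hδ, _, hR⟩, _⟩ => axioms_of_represents_discSum hδ hR⟩
  obtain ⟨δ, hδ, hI, hR⟩ := exists_discSum_of_axioms h
  exact ⟨δ, ⟨hδ, hI, hR⟩, fun δ' ⟨_, hI', _⟩ =>
    hR.eq_of_constEquiv_discSum (by rw [abs_of_pos hδ.1]; exact hδ.2) hI'⟩
end
end

section
/- Let D be a closed subset of (0,1), let c : [0,1] → [0,∞] be grounded and lower semicontinuous with c(1) = ∞, and let ≿ be the binary relation on l∞ represented by I(x) = min_{δ∈[0,1)} { (1−δ)·Σ_{t=0}^∞ δ^t x_t + c(δ) } (i.e., x ≿ y iff I(x) ≥ I(y)). Then the following are equivalent: (i) Unanimity holds, i.e., for all x,y ∈ l∞, if (1−δ)·Σ_t δ^t x_t ≥ (1−δ)·Σ_t δ^t y_t for all δ ∈ D, then x ≿ y; (ii) c(δ) = ∞ for every δ ∈ [0,1) with δ ∉ D, so that I(x) = min_{δ∈D} { (1−δ)·Σ_{t=0}^∞ δ^t x_t + c(δ) }. -/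
open scoped ENNReal BoundedContinuousFunction

noncomputable section

/-!
If `c δ₀ < ∞` for some `δ₀ ∉ D`, choose `ε > 0` with the `ε`-ball around `δ₀` disjoint from the
closed set `D`, and let `x` be the sequence whose generating polynomial is
`λ ((X - δ₀)² - ε²/2)`, so that its discounted value at `δ` is `(1 - δ) λ ((δ - δ₀)² - ε²/2)`.
This is positive for every `δ ∈ D`, so Unanimity gives `x ≿ 0`; but for large `λ` the term of
the variational minimum at `δ₀` is below `I 0`. Conversely, once `c = ∞` off `D` the minimum is
over `D` only, and a sequence dominating another at every `δ ∈ D` has a larger minimum.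
-/

open Polynomial

def coeffSeq (p : ℝ[X]) : Linf :=
  ofSeq p.coeff (∑ i ∈ Finset.range (p.natDegree + 1), |p.coeff i|) (by
    intro n
    rcases lt_or_ge p.natDegree n with h | h
    · rw [coeff_eq_zero_of_natDegree_lt h, abs_zero]
      exact Finset.sum_nonneg fun _ _ => abs_nonneg _
    · exact Finset.single_le_sum (f := fun i => |p.coeff i|) (fun _ _ => abs_nonneg _)
        (Finset.mem_range.2 (Nat.lt_succ_of_le h)))

lemma coeffSeq_apply (p : ℝ[X]) (n : ℕ) : coeffSeq p n = p.coeff n := rfl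

lemma discSum_coeffSeq (p : ℝ[X]) (δ : ℝ) : discSum δ (coeffSeq p) = (1 - δ) * p.eval δ := by
  rw [discSum, eval_eq_sum_range, tsum_eq_sum (s := Finset.range (p.natDegree + 1))]
  · simp only [coeffSeq_apply, mul_comm]
  · intro n hn
    rw [coeffSeq_apply, coeff_eq_zero_of_natDegree_lt (by simpa using hn), mul_zero]

lemma exists_discSum_lt_and_pos_of_le_dist {δ₀ ε : ℝ} (hδ₀ : δ₀ < 1) (hε : 0 < ε) (m : ℝ) :
    ∃ x : Linf, discSum δ₀ x < m ∧ ∀ δ < 1, ε ≤ dist δ δ₀ → 0 < discSum δ x := by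
  have h1δ₀ : 0 < 1 - δ₀ := sub_pos.2 hδ₀
  set lam := 2 * (|m| + 1) / ((1 - δ₀) * ε ^ 2)
  have hlam : 0 < lam := by positivity
  set x := coeffSeq (C lam * ((X - C δ₀) ^ 2 - C (ε ^ 2 / 2)))
  have hval : ∀ δ, discSum δ x = (1 - δ) * (lam * ((δ - δ₀) ^ 2 - ε ^ 2 / 2)) := fun δ => by
    simp [x, discSum_coeffSeq]
  refine ⟨x, ?_, fun δ hδ hdist => ?_⟩
  · have : (1 - δ₀) * (lam * ((δ₀ - δ₀) ^ 2 - ε ^ 2 / 2)) = -(|m| + 1) := by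
      simp only [lam]
      field_simp
      ring
    rw [hval, this]
    linarith [neg_abs_le m]
  · have hsq : ε ^ 2 ≤ (δ - δ₀) ^ 2 := by
      rw [← sq_abs (δ - δ₀)]
      exact pow_le_pow_left₀ hε.le (by rwa [← Real.dist_eq]) 2
    rw [hval]
    exact mul_pos (sub_pos.2 hδ) (mul_pos hlam (by nlinarith))

lemma EReal.coe_le_coe_add_coe_ennreal_iff {s t : ℝ} {a : ℝ≥0∞} (ha : a ≠ ⊤) :
    (s : EReal) ≤ t + a ↔ s ≤ t + a.toReal := by
  rw [← EReal.coe_ennreal_toReal ha, ← EReal.coe_add, EReal.coe_le_coe_iff]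

lemma EReal.coe_eq_coe_add_coe_ennreal_iff {s t : ℝ} {a : ℝ≥0∞} :
    (s : EReal) = t + a ↔ a ≠ ⊤ ∧ s = t + a.toReal := by
  by_cases ha : a = ⊤
  · simp [ha]
  · rw [← EReal.coe_ennreal_toReal ha, ← EReal.coe_add, EReal.coe_eq_coe_iff]
    exact ⟨fun h => ⟨ha, h⟩, And.right⟩

namespace VarMinDelta

variable {D E : Set ℝ} {c : ℝ → ℝ≥0∞} {I : Linf → ℝ}

lemma exists_eq (h : VarMinDelta E c I) (x : Linf) :
    ∃ δ ∈ E, c δ ≠ ⊤ ∧ I x = discSum δ x + (c δ).toReal := by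
  obtain ⟨δ, hδ, heq⟩ := (h x).1
  exact ⟨δ, hδ, EReal.coe_eq_coe_add_coe_ennreal_iff.1 heq⟩

lemma le (h : VarMinDelta E c I) {δ : ℝ} (hδ : δ ∈ E) (hc : c δ ≠ ⊤) (x : Linf) :
    I x ≤ discSum δ x + (c δ).toReal :=
  (EReal.coe_le_coe_add_coe_ennreal_iff hc).1 ((h x).2 δ hδ)

lemma of_subset (h : VarMinDelta E c I) (hDE : D ⊆ E) (htop : ∀ δ ∈ E, δ ∉ D → c δ = ⊤) :
    VarMinDelta D c I := by
  intro x
  refine ⟨?_, fun δ hδ => (h x).2 δ (hDE hδ)⟩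
  obtain ⟨δ, hδ, heq⟩ := (h x).1
  refine ⟨δ, ?_, heq⟩
  by_contra hδD
  exact (EReal.coe_eq_coe_add_coe_ennreal_iff.1 heq).1 (htop δ hδ hδD)

lemma le_of_discSum_le (h : VarMinDelta D c I) {x y : Linf}
    (hxy : ∀ δ ∈ D, discSum δ y ≤ discSum δ x) : I y ≤ I x := by
  obtain ⟨δ, hδ, hc, hx⟩ := h.exists_eq x
  linarith [h.le hδ hc y, hxy δ hδ]

lemma eq_top_of_unanimous (h : VarMinDelta E c I) (hD : D ⊆ Set.Iio 1) (hDc : IsClosed D)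
    (hU : ∀ x, (∀ δ ∈ D, 0 ≤ discSum δ x) → I 0 ≤ I x)
    {δ₀ : ℝ} (hδ₀ : δ₀ ∈ E) (hδ₀1 : δ₀ < 1) (hδ₀D : δ₀ ∉ D) : c δ₀ = ⊤ := by
  by_contra hc
  obtain ⟨ε, hε, hball⟩ := Metric.isOpen_iff.1 hDc.isOpen_compl δ₀ hδ₀D
  obtain ⟨x, hx₀, hxpos⟩ :=
    exists_discSum_lt_and_pos_of_le_dist hδ₀1 hε (I 0 - (c δ₀).toReal)
  have hxD : ∀ δ ∈ D, 0 ≤ discSum δ x := fun δ hδ =>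
    (hxpos δ (hD hδ) (not_lt.1 fun hlt => hball hlt hδ)).le
  linarith [hU x hxD, h.le hδ₀ hc x]

end VarMinDelta

theorem stmt3_general (D : Set ℝ) (hD : D ⊆ Set.Ioo (0 : ℝ) 1) (hDclosed : IsClosed D)
    (c : ℝ → ℝ≥0∞) (I : Linf → ℝ) (hI : VarMinDelta (Set.Ico (0 : ℝ) 1) c I)
    (R : Linf → Linf → Prop) (hR : ∀ x y, R x y ↔ I y ≤ I x) :
    (∀ x y : Linf, (∀ δ ∈ D, discSum δ y ≤ discSum δ x) → R x y) ↔
      ((∀ δ ∈ Set.Ico (0 : ℝ) 1, δ ∉ D → c δ = ⊤) ∧ VarMinDelta D c I) := by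
  simp only [hR]
  constructor
  · intro hU
    have htop : ∀ δ ∈ Set.Ico (0 : ℝ) 1, δ ∉ D → c δ = ⊤ := fun δ hδ hδD =>
      hI.eq_top_of_unanimous (fun δ' hδ' => (hD hδ').2) hDclosed
        (fun x hx => hU x 0 fun δ hδ => by simpa [discSum] using hx δ hδ) hδ hδ.2 hδD
    exact ⟨htop, hI.of_subset (hD.trans Set.Ioo_subset_Ico_self) htop⟩
  · exact fun ⟨_, hID⟩ _ _ => hID.le_of_discSum_le

/-- aggregation of exponential discounting experts: for a variational
discounting preference with cost `c` and set of experts' discount factors `D`, Unanimity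
holds iff `c(δ) = ∞` for every `δ ∉ D`, in which case the minimum can be taken over `D`. -/
theorem stmt3 (D : Set ℝ) (hD : D ⊆ Set.Ioo (0 : ℝ) 1) (hDclosed : IsClosed D)
    (c : ℝ → ℝ≥0∞) (hg : Grounded01 c) (hlsc : LowerSemicontinuousOn c (Set.Icc 0 1))
    (hc1 : c 1 = ⊤) (I : Linf → ℝ) (hI : VarMinDelta (Set.Ico (0 : ℝ) 1) c I)
    (R : Linf → Linf → Prop) (hR : ∀ x y, R x y ↔ I y ≤ I x) :
    (∀ x y : Linf, (∀ δ ∈ D, discSum δ y ≤ discSum δ x) → R x y) ↔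
      ((∀ δ ∈ Set.Ico (0 : ℝ) 1, δ ∉ D → c δ = ⊤) ∧ VarMinDelta D c I) :=
  stmt3_general D hD hDclosed c I hI R hR

end
end

section
/- Let T : l∞ → l∞ be a continuous positive linear map with adjoint T*. Suppose (i) ‖T(𝟙_{A_n})‖_∞ → 0 whenever (A_n) is a decreasing sequence of subsets of ℕ with empty intersection, and (ii) for every n ∈ ℕ there is a finite set E_n ⊆ ℕ such that the sequence T(𝟙_{{n}}) vanishes outside E_n. Then T* is a Yosida–Hewitt transformation: T*(μ) ∈ ca(ℕ) for every μ ∈ ca(ℕ), and T*(μ) ∈ pa(ℕ) for every μ ∈ pa(ℕ). -/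
open scoped ENNReal BoundedContinuousFunction

noncomputable section

lemma indic_singleton_apply (m k : ℕ) : indic {m} k = if k = m then 1 else 0 := by
  simp [indic, ofSeq, Pi.single_apply]

lemma eq_sum_smul_indic_singleton (x : Linf) (E : Finset ℕ) (hx : ∀ m ∉ E, x m = 0) :
    x = ∑ m ∈ E, x m • indic {m} := by
  ext k
  simp only [BoundedContinuousFunction.sum_apply, BoundedContinuousFunction.coe_smul,
    smul_eq_mul, indic_singleton_apply, mul_ite, mul_one, mul_zero,
    Finset.sum_ite_eq]
  split_ifs with hk
  · rfl
  · exact hx k hk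

lemma apply_eq_zero_of_mem_paSet {μ : Ba} (hμ : μ ∈ paSet) (x : Linf) (E : Finset ℕ)
    (hx : ∀ m ∉ E, x m = 0) : μ x = 0 := by
  rw [eq_sum_smul_indic_singleton x E hx, map_sum]
  exact Finset.sum_eq_zero fun m _ => by rw [map_smul, hμ m, smul_zero]

theorem stmt17_general (T : Linf → Linf)
    (h1 : ∀ A : ℕ → Set ℕ, (∀ n, A (n + 1) ⊆ A n) → (⋂ n, A n) = ∅ →
      Filter.Tendsto (fun n => ‖T (indic (A n))‖) Filter.atTop (nhds 0))
    (h2 : ∀ n : ℕ, ∃ E : Finset ℕ, ∀ m : ℕ, m ∉ E → T (indic {n}) m = 0) :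
    (∀ μ ∈ caSet, ∀ A : ℕ → Set ℕ, (∀ n, A (n + 1) ⊆ A n) → (⋂ n, A n) = ∅ →
      Filter.Tendsto (fun n => μ (T (indic (A n)))) Filter.atTop (nhds 0)) ∧
    (∀ μ ∈ paSet, ∀ n : ℕ, μ (T (indic {n})) = 0) := by
  refine ⟨fun μ _ A hdec hempty => ?_, fun μ hμ n => ?_⟩
  · have hTA : Filter.Tendsto (fun n => T (indic (A n))) Filter.atTop (nhds 0) :=
      tendsto_zero_iff_norm_tendsto_zero.mpr (h1 A hdec hempty)
    exact ((ContinuousLinearMap.continuous μ).tendsto' 0 0 (map_zero μ)).comp hTA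
  · obtain ⟨E, hE⟩ := h2 n
    exact apply_eq_zero_of_mem_paSet hμ _ E hE

/-- Lemma: a criterion for Yosida–Hewitt transformations: if
`‖T(𝟙_{Aₙ})‖ → 0` along every decreasing sequence of sets with empty intersection, and
each `T(𝟙_{{n}})` has finite support, then the adjoint `T*` (given by
`T*(μ) = μ ∘ T`) maps `ca(ℕ)` into `ca(ℕ)` and `pa(ℕ)` into `pa(ℕ)`. -/
theorem stmt17 (T : Linf → Linf) (hlin : IsLinearMap ℝ T) (hcont : Continuous T)
    (hpos : PosMap T)
    (h1 : ∀ A : ℕ → Set ℕ, (∀ n, A (n + 1) ⊆ A n) → (⋂ n, A n) = ∅ →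
      Filter.Tendsto (fun n => ‖T (indic (A n))‖) Filter.atTop (nhds 0))
    (h2 : ∀ n : ℕ, ∃ E : Finset ℕ, ∀ m : ℕ, m ∉ E → T (indic {n}) m = 0) :
    (∀ μ ∈ caSet, ∀ A : ℕ → Set ℕ, (∀ n, A (n + 1) ⊆ A n) → (⋂ n, A n) = ∅ →
      Filter.Tendsto (fun n => μ (T (indic (A n)))) Filter.atTop (nhds 0)) ∧
    (∀ μ ∈ paSet, ∀ n : ℕ, μ (T (indic {n})) = 0) :=
  stmt17_general T h1 h2
end
end
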